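/- Let p be a prime, χ : U_1 → ℤ/p²ℤ a continuous character of type ⟨l, m⟩ with p ∤ m and standard expansion having top coefficient a_m (so χ(E_m) = p·a_m). Then for every element u of the Nottingham group 𝒩 over F_p, (ᵤχ)(E_m) = p·a_m, i.e., the coefficient a_m is invariant under the Nottingham group action. -/

import Mathlib

/-!
If `u = t + O(t²)` then `1 + u^m ≡ 1 + t^m` modulo `t^(m+1)`, so `1 + u^m` and `E_m` differ by an
element of `1 + t^(m+1) F_p[[t]]`, on which `χ` vanishes because `m` is its largest break.
-/

open PowerSeries

/-- The subgroup `1 + t^k F_p[[t]]` of the units of `F_p[[t]]`. -/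
def Ugrp (p k : ℕ) : Subgroup (PowerSeries (ZMod p))ˣ where
  carrier := {u | (X : PowerSeries (ZMod p)) ^ k ∣ ((u : PowerSeries (ZMod p)) - 1)}
  one_mem' := by simp
  mul_mem' := by
    intro a b ha hb
    have h : ((a * b : (PowerSeries (ZMod p))ˣ) : PowerSeries (ZMod p)) - 1
        = (a : PowerSeries (ZMod p)) * ((b : PowerSeries (ZMod p)) - 1)
          + ((a : PowerSeries (ZMod p)) - 1) := by push_cast; ring
    rw [Set.mem_setOf_eq, h]
    exact dvd_add (Dvd.dvd.mul_left hb _) ha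
  inv_mem' := by
    intro a ha
    have key : ((a⁻¹ : (PowerSeries (ZMod p))ˣ) : PowerSeries (ZMod p)) - 1
        = -(((a⁻¹ : (PowerSeries (ZMod p))ˣ) : PowerSeries (ZMod p))
            * ((a : PowerSeries (ZMod p)) - 1)) := by
      rw [mul_sub, Units.inv_mul]; ring
    rw [Set.mem_setOf_eq, key]
    exact dvd_neg.mpr (Dvd.dvd.mul_left ha _)

/-- `E j = 1 + t^j` as an element of the principal units `U₁`. -/
noncomputable def Eu (p : ℕ) [Fact p.Prime] (j : ℕ) (hj : 0 < j) : Ugrp p 1 := by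
  have hu : IsUnit (1 + X ^ j : PowerSeries (ZMod p)) := by
    rw [isUnit_iff_constantCoeff]
    simp [zero_pow hj.ne']
  refine ⟨hu.unit, ?_⟩
  show (X : PowerSeries (ZMod p)) ^ 1 ∣ _
  rw [IsUnit.unit_spec, pow_one, add_sub_cancel_left]
  exact dvd_pow_self X hj.ne'

/-- `χ` is a homomorphism from the multiplicative group `U₁` to `ℤ/p²ℤ`. -/
def IsHom (p : ℕ) (χ : Ugrp p 1 → ZMod (p ^ 2)) : Prop :=
  ∀ a b : Ugrp p 1, χ (a * b) = χ a + χ b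

/-- Continuity of `χ` (the target being discrete): `χ` kills some `1 + t^N F_p[[t]]`. -/
def IsCont (p : ℕ) (χ : Ugrp p 1 → ZMod (p ^ 2)) : Prop :=
  ∃ N : ℕ, ∀ u : Ugrp p 1,
    (X : PowerSeries (ZMod p)) ^ N ∣ ((u : (PowerSeries (ZMod p))ˣ) : PowerSeries (ZMod p)) - 1 →
      χ u = 0

/-- The break sequence of `χ : U₁ → ℤ/p²ℤ` is `⟨b0, b1⟩`: `b^{(j-1)}` is the largest
positive `b` such that `χ(1 + t^b F_p[[t]])` is not contained in `p^j · ℤ/p²ℤ`. -/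
def HasBreaks (p : ℕ) (χ : Ugrp p 1 → ZMod (p ^ 2)) (b0 b1 : ℕ) : Prop :=
  IsGreatest {b : ℕ | 0 < b ∧ ∃ u : Ugrp p 1,
    ((X : PowerSeries (ZMod p)) ^ b ∣ ((u : (PowerSeries (ZMod p))ˣ) : PowerSeries (ZMod p)) - 1)
      ∧ ¬ (p : ZMod (p ^ 2)) ∣ χ u} b0 ∧
  IsGreatest {b : ℕ | 0 < b ∧ ∃ u : Ugrp p 1,
    ((X : PowerSeries (ZMod p)) ^ b ∣ ((u : (PowerSeries (ZMod p))ˣ) : PowerSeries (ZMod p)) - 1)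
      ∧ χ u ≠ 0} b1

theorem X_pow_succ_dvd_pow_sub_X_pow {R : Type*} [CommRing R] {u : R⟦X⟧}
    (hu0 : constantCoeff u = 0) (hu1 : coeff 1 u = 1) (m : ℕ) :
    (X : R⟦X⟧) ^ (m + 1) ∣ u ^ m - X ^ m := by
  obtain ⟨g, rfl⟩ := X_dvd_iff.mpr hu0
  have hg : constantCoeff g = 1 := by simpa using hu1
  have hfactor : (X * g) ^ m - X ^ m = X ^ m * (g ^ m - 1) := by ring
  rw [hfactor, pow_succ]
  exact mul_dvd_mul_left _ (X_dvd_iff.mpr (by simp [hg]))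

theorem Units.dvd_val_mul_inv_sub_one {R : Type*} [CommRing R] {a b : Rˣ} {c : R}
    (h : c ∣ (a : R) - b) : c ∣ ((a * b⁻¹ : Rˣ) : R) - 1 := by
  have hsub : ((a * b⁻¹ : Rˣ) : R) - 1 = ((a : R) - b) * ↑b⁻¹ := by
    rw [sub_mul, Units.mul_inv, Units.val_mul]
  rw [hsub]
  exact h.mul_right _

theorem coe_Eu (p : ℕ) [Fact p.Prime] (j : ℕ) (hj : 0 < j) :
    ((Eu p j hj : (ZMod p)⟦X⟧ˣ) : (ZMod p)⟦X⟧) = 1 + X ^ j := by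
  simp [Eu]

theorem HasBreaks.map_eq_zero_of_X_pow_dvd {p b0 b1 n : ℕ} {χ : Ugrp p 1 → ZMod (p ^ 2)}
    (hb : HasBreaks p χ b0 b1) (hn : b1 < n) {w : Ugrp p 1}
    (hw : (X : (ZMod p)⟦X⟧) ^ n ∣ ((w : (ZMod p)⟦X⟧ˣ) : (ZMod p)⟦X⟧) - 1) : χ w = 0 := by
  by_contra hne
  exact (hb.2.2 ⟨by omega, w, hw, hne⟩).not_gt hn

theorem IsHom.map_eq_of_X_pow_dvd_sub {p n : ℕ} {χ : Ugrp p 1 → ZMod (p ^ 2)}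
    (hχ : IsHom p χ)
    (hker : ∀ w : Ugrp p 1,
      (X : (ZMod p)⟦X⟧) ^ n ∣ ((w : (ZMod p)⟦X⟧ˣ) : (ZMod p)⟦X⟧) - 1 → χ w = 0)
    {v w : Ugrp p 1}
    (h : (X : (ZMod p)⟦X⟧) ^ n ∣
      ((v : (ZMod p)⟦X⟧ˣ) : (ZMod p)⟦X⟧) - ((w : (ZMod p)⟦X⟧ˣ) : (ZMod p)⟦X⟧)) :
    χ v = χ w := by
  have hquot : χ (v * w⁻¹) = 0 := hker _ (Units.dvd_val_mul_inv_sub_one h)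
  rw [← inv_mul_cancel_right v w, hχ, hquot, zero_add]

theorem twisted_char_eval_Em_general (p : ℕ) [Fact p.Prime] (l m : ℕ) (hm0 : 0 < m)
    (χ : Ugrp p 1 → ZMod (p ^ 2)) (hhom : IsHom p χ)
    (hb : HasBreaks p χ l m)
    (u : PowerSeries (ZMod p)) (hu0 : constantCoeff u = 0)
    (hu1 : coeff 1 u = 1) (am : ZMod (p ^ 2))
    (ha : χ (Eu p m hm0) = (p : ZMod (p ^ 2)) * am) :
    ∀ v : Ugrp p 1,
      ((v : (PowerSeries (ZMod p))ˣ) : PowerSeries (ZMod p)) = 1 + u ^ m →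
      χ v = (p : ZMod (p ^ 2)) * am := by
  intro v hv
  rw [← ha]
  refine hhom.map_eq_of_X_pow_dvd_sub
    (fun w hw => hb.map_eq_zero_of_X_pow_dvd (Nat.lt_succ_self m) hw) ?_
  rw [hv, coe_Eu, add_sub_add_left_eq_sub]
  exact X_pow_succ_dvd_pow_sub_X_pow hu0 hu1 m

/-- Lemma (evaluation, part (b)): for `χ` of type `⟨l, m⟩` with `p ∤ m` and top coefficient
`a_m` (so `χ(E_m) = p·a_m`), and any `u` in the Nottingham group,
`(ᵤχ)(E_m) = χ(1 + u^m) = p·a_m`. -/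
theorem twisted_char_eval_Em (p : ℕ) [Fact p.Prime] (l m : ℕ) (hl : 0 < l) (hm0 : 0 < m)
    (hm : ¬ p ∣ m)
    (χ : Ugrp p 1 → ZMod (p ^ 2)) (hhom : IsHom p χ) (hcont : IsCont p χ)
    (hb : HasBreaks p χ l m)
    (u : PowerSeries (ZMod p)) (hu0 : constantCoeff u = 0)
    (hu1 : coeff 1 u = 1) (am : ZMod (p ^ 2))
    (ha : χ (Eu p m hm0) = (p : ZMod (p ^ 2)) * am) :
    ∀ v : Ugrp p 1,
      ((v : (PowerSeries (ZMod p))ˣ) : PowerSeries (ZMod p)) = 1 + u ^ m →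
      χ v = (p : ZMod (p ^ 2)) * am :=
  twisted_char_eval_Em_general p l m hm0 χ hhom hb u hu0 hu1 am ha
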